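/- Let a, b ∈ {0,1}* with |a| > |b|, and suppose δ(a,b) ∈ {Q', Q'−ρ} for constants Q', ρ with 0 < ρ < Q'. Define a_new = 2^{|a|} ++ a and b_new = 0^{|a|−|b|} ++ 2^{|a|} ++ b over alphabet {0,1,2} (where 2^{|a|} denotes the symbol 2 repeated |a| times). Then |a_new| = |b_new| and δ(a_new, b_new) = (|a| − |b|) + δ(a,b); in particular, with Q = Q' + |a| − |b|, δ(a_new,b_new) = Q − ρ iff δ(a,b) = Q' − ρ, and δ(a_new,b_new) = Q iff δ(a,b) = Q'. -/

import Mathlib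

/-- Cost structure for Levenshtein distance (formerly in Mathlib, `Mathlib.Data.List.EditDistance.Defs`). -/
structure Levenshtein.Cost (α β δ : Type*) where
  delete : α → δ
  insert : β → δ
  substitute : α → β → δ

/-- The default unit-cost structure (formerly in Mathlib). -/
def Levenshtein.defaultCost {α : Type*} [DecidableEq α] : Levenshtein.Cost α α ℕ where
  delete _ := 1
  insert _ := 1
  substitute a b := if a = b then 0 else 1

/-- Levenshtein distance with cost structure `C`, by the recurrence that Mathlib's removed
`levenshtein` satisfied (`levenshtein_nil_nil`, `levenshtein_nil_cons`, `levenshtein_cons_nil`,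
`levenshtein_cons_cons`). -/
def levenshtein {α β δ : Type*} [AddZeroClass δ] [Min δ] (C : Levenshtein.Cost α β δ) :
    List α → List β → δ
  | [], [] => 0
  | [], y :: ys => C.insert y + levenshtein C [] ys
  | x :: xs, [] => C.delete x + levenshtein C xs []
  | x :: xs, y :: ys =>
      min (C.delete x + levenshtein C xs (y :: ys))
        (min (C.insert y + levenshtein C (x :: xs) ys) (C.substitute x y + levenshtein C xs ys))

/-- Unit-cost edit distance between two lists over a decidable-eq alphabet. -/
def editDist (a b : List ℕ) : ℕ :=
  levenshtein Levenshtein.defaultCost a b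

/-!
Inserting the padding `0^(|a|-|b|)` and then matching the two blocks of `2`s gives the upper
bound. For the lower bound, read an alignment from the left: as long as neither the padding nor
the `2`-block of `a_new` is used up, each step costs one, since `0 ≠ 2`. If the padding runs out
first, the `2`-blocks cancel, and erasing the surplus `2`s, which occur in neither `a` nor `b`,
cannot increase the distance. If the `2`-block of `a_new` runs out first, all `|a|` symbols `2` of
`b_new` must still be inserted, and `|a| ≥ δ(a, b) - |b|`.
-/

open Levenshtein List

section

variable {α : Type*} [DecidableEq α]

theorem levenshtein_nil_left (v : List α) : levenshtein defaultCost [] v = v.length := by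
  induction v with
  | nil => simp only [levenshtein, length_nil]
  | cons y v ih => rw [levenshtein, ih, length_cons, add_comm]; rfl

theorem levenshtein_nil_right (u : List α) : levenshtein defaultCost u [] = u.length := by
  induction u with
  | nil => simp only [levenshtein, length_nil]
  | cons x u ih => rw [levenshtein, ih, length_cons, add_comm]; rfl

theorem levenshtein_cons_cons (x y : α) (u v : List α) :
    levenshtein defaultCost (x :: u) (y :: v) =
      min (1 + levenshtein defaultCost u (y :: v))
        (min (1 + levenshtein defaultCost (x :: u) v)
          ((if x = y then 0 else 1) + levenshtein defaultCost u v)) := by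
  rw [levenshtein]; rfl

theorem levenshtein_cons_left_le (x : α) (u v : List α) :
    levenshtein defaultCost (x :: u) v ≤ levenshtein defaultCost u v + 1 := by
  cases v with
  | nil => simp only [levenshtein_nil_right, length_cons, le_refl]
  | cons y v => rw [levenshtein_cons_cons]; omega

theorem levenshtein_cons_right_le (y : α) (u v : List α) :
    levenshtein defaultCost u (y :: v) ≤ levenshtein defaultCost u v + 1 := by
  cases u with
  | nil => simp only [levenshtein_nil_left, length_cons, le_refl]
  | cons x u => rw [levenshtein_cons_cons]; omega

theorem levenshtein_cons_cons_le (x y : α) (u v : List α) :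
    levenshtein defaultCost (x :: u) (y :: v) ≤ levenshtein defaultCost u v + 1 := by
  rw [levenshtein_cons_cons]; split_ifs <;> omega

theorem levenshtein_le_cons_left (x : α) (u v : List α) :
    levenshtein defaultCost u v ≤ levenshtein defaultCost (x :: u) v + 1 := by
  induction v generalizing u with
  | nil => simp only [levenshtein_nil_right, length_cons]; omega
  | cons y v ih =>
    have := levenshtein_cons_right_le y u v
    have := ih u
    rw [levenshtein_cons_cons]
    omega

theorem levenshtein_le_cons_right (y : α) (u v : List α) :
    levenshtein defaultCost u v ≤ levenshtein defaultCost u (y :: v) + 1 := by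
  induction u generalizing v with
  | nil => simp only [levenshtein_nil_left, length_cons]; omega
  | cons x u ih =>
    have := levenshtein_cons_left_le x u v
    have := ih v
    rw [levenshtein_cons_cons]
    omega

theorem levenshtein_cons_cons_self (c : α) (u v : List α) :
    levenshtein defaultCost (c :: u) (c :: v) = levenshtein defaultCost u v := by
  have := levenshtein_le_cons_left c u v
  have := levenshtein_le_cons_right c u v
  rw [levenshtein_cons_cons, if_pos rfl]
  omega

theorem levenshtein_append_append_left (r u v : List α) :
    levenshtein defaultCost (r ++ u) (r ++ v) = levenshtein defaultCost u v := by
  induction r with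
  | nil => rfl
  | cons c r ih => rw [cons_append, cons_append, levenshtein_cons_cons_self, ih]

theorem levenshtein_append_right_le (u s v : List α) :
    levenshtein defaultCost u (s ++ v) ≤ levenshtein defaultCost u v + s.length := by
  induction s with
  | nil => rfl
  | cons y s ih =>
    have := levenshtein_cons_right_le y u (s ++ v)
    rw [cons_append, length_cons]
    omega

theorem levenshtein_le_length_add_length (u v : List α) :
    levenshtein defaultCost u v ≤ u.length + v.length := by
  simpa [levenshtein_nil_right] using levenshtein_append_right_le u v []

theorem levenshtein_filter_le (p : α → Bool) (u v : List α) :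
    levenshtein defaultCost (u.filter p) (v.filter p) ≤ levenshtein defaultCost u v := by
  induction u generalizing v with
  | nil => simpa only [filter_nil, levenshtein_nil_left] using length_filter_le p v
  | cons x u ihu =>
    induction v with
    | nil => simpa only [filter_nil, levenshtein_nil_right] using length_filter_le p (x :: u)
    | cons y v ihv =>
      have hdel : levenshtein defaultCost ((x :: u).filter p) ((y :: v).filter p) ≤
          levenshtein defaultCost (u.filter p) ((y :: v).filter p) + 1 := by
        rw [filter_cons (x := x)]; split
        · exact levenshtein_cons_left_le _ _ _
        · omega
      have hins : levenshtein defaultCost ((x :: u).filter p) ((y :: v).filter p) ≤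
          levenshtein defaultCost ((x :: u).filter p) (v.filter p) + 1 := by
        rw [filter_cons (x := y)]; split
        · exact levenshtein_cons_right_le _ _ _
        · omega
      have hsub : levenshtein defaultCost ((x :: u).filter p) ((y :: v).filter p) ≤
          (if x = y then 0 else 1) + levenshtein defaultCost (u.filter p) (v.filter p) := by
        split_ifs with hxy
        · subst hxy
          rw [filter_cons, filter_cons]; split
          · rw [levenshtein_cons_cons_self]; omega
          · omega
        · rw [filter_cons, filter_cons]; split_ifs
          · exact (levenshtein_cons_cons_le _ _ _ _).trans_eq (add_comm _ _)
          · exact (levenshtein_cons_left_le _ _ _).trans_eq (add_comm _ _)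
          · exact (levenshtein_cons_right_le _ _ _).trans_eq (add_comm _ _)
          · omega
      have := ihu (y :: v)
      have := ihu v
      rw [levenshtein_cons_cons]
      omega

theorem filter_ne_eq_self_of_notMem {c : α} {u : List α} (hu : c ∉ u) :
    u.filter (· ≠ c) = u :=
  filter_eq_self.2 fun _ ha => by simpa using ne_of_mem_of_not_mem ha hu

theorem count_le_levenshtein_of_notMem {c : α} {u : List α} (hu : c ∉ u) (t : List α) :
    t.count c ≤ levenshtein defaultCost u t := by
  simpa [filter_eq, count_eq_zero.2 hu, levenshtein_nil_left] using
    levenshtein_filter_le (· = c) u t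

theorem min_le_levenshtein_replicate_append {c : α} {u v w : List α}
    (hu : c ∉ u) (hv : c ∉ v) (hw : c ∉ w) {p : ℕ} (hp : p ≤ u.length) :
    min (w.length + levenshtein defaultCost u v) (p + (levenshtein defaultCost u v - v.length)) ≤
      levenshtein defaultCost (replicate p c ++ u) (w ++ replicate u.length c ++ v) := by
  induction w generalizing p with
  | nil =>
    obtain ⟨m, hm⟩ := Nat.exists_eq_add_of_le hp
    have hfilter := levenshtein_filter_le (· ≠ c) u (replicate m c ++ v)
    simp only [filter_append, filter_ne_eq_self_of_notMem hu, filter_ne_eq_self_of_notMem hv,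
      filter_replicate] at hfilter
    rw [hm, replicate_add, nil_append, append_assoc, levenshtein_append_append_left]
    exact (min_le_left _ _).trans (by simpa using hfilter)
  | cons y w ih =>
    have hyc : y ≠ c := fun h => hw (h ▸ mem_cons_self)
    have hw : c ∉ w := fun h => hw (mem_cons_of_mem y h)
    induction p with
    | zero =>
      have hcount := count_le_levenshtein_of_notMem hu (y :: w ++ replicate u.length c ++ v)
      simp only [count_append, count_cons, count_replicate_self, count_eq_zero.2 hv,
        count_eq_zero.2 hw, beq_iff_eq, hyc] at hcount
      have := levenshtein_le_length_add_length u v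
      simp only [replicate_zero, nil_append]
      omega
    | succ p ihp =>
      have hdel := ihp (by omega)
      have hins := ih hw (p := p + 1) hp
      have hsub := ih hw (p := p) (by omega)
      simp only [replicate_succ, cons_append, length_cons] at hdel hins hsub ⊢
      rw [levenshtein_cons_cons, if_neg hyc.symm]
      omega

theorem levenshtein_replicate_append_eq {c : α} {u v w : List α}
    (hu : c ∉ u) (hv : c ∉ v) (hw : c ∉ w) (hlen : w.length + v.length ≤ u.length) :
    levenshtein defaultCost (replicate u.length c ++ u) (w ++ replicate u.length c ++ v) =
      w.length + levenshtein defaultCost u v := by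
  apply le_antisymm
  · have := levenshtein_append_right_le (replicate u.length c ++ u) w (replicate u.length c ++ v)
    rw [levenshtein_append_append_left, ← append_assoc] at this
    omega
  · have := min_le_levenshtein_replicate_append hu hv hw le_rfl
    omega

end

theorem gadget_size_preserved_general
    (a b : List ℕ) (Q' ρ : ℕ)
    (ha : ∀ x ∈ a, x = 0 ∨ x = 1) (hb : ∀ x ∈ b, x = 0 ∨ x = 1)
    (hlen : b.length < a.length)
    (hρQ : ρ < Q') :
    let aNew := List.replicate a.length 2 ++ a
    let bNew := List.replicate (a.length - b.length) 0 ++ List.replicate a.length 2 ++ b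
    let Q := Q' + a.length - b.length
    aNew.length = bNew.length ∧
    editDist aNew bNew = (a.length - b.length) + editDist a b ∧
    (editDist aNew bNew = Q - ρ ↔ editDist a b = Q' - ρ) ∧
    (editDist aNew bNew = Q ↔ editDist a b = Q') := by
  intro aNew bNew Q
  have two_notMem : ∀ l : List ℕ, (∀ x ∈ l, x = 0 ∨ x = 1) → 2 ∉ l := fun l hl h => by
    rcases hl 2 h with h | h <;> simp at h
  have key : editDist aNew bNew = (a.length - b.length) + editDist a b := by
    have h := levenshtein_replicate_append_eq (two_notMem a ha) (two_notMem b hb)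
      (w := replicate (a.length - b.length) 0) (by simp) (by rw [length_replicate]; omega)
    rwa [length_replicate] at h
  refine ⟨by simp [aNew, bNew]; omega, key, ?_, ?_⟩ <;> omega

/-- Gadget size equalization (Theorem on preserving gadget sizes):
prepending `2^{|a|}` to `a` and `0^{|a|-|b|} 2^{|a|}` to `b` yields strings of
equal length whose edit distance is `(|a|-|b|) + δ(a,b)`. -/
theorem gadget_size_preserved
    (a b : List ℕ) (Q' ρ : ℕ)
    (ha : ∀ x ∈ a, x = 0 ∨ x = 1) (hb : ∀ x ∈ b, x = 0 ∨ x = 1)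
    (hlen : b.length < a.length)
    (hρ : 0 < ρ) (hρQ : ρ < Q')
    (hδ : editDist a b = Q' ∨ editDist a b = Q' - ρ) :
    let aNew := List.replicate a.length 2 ++ a
    let bNew := List.replicate (a.length - b.length) 0 ++ List.replicate a.length 2 ++ b
    let Q := Q' + a.length - b.length
    aNew.length = bNew.length ∧
    editDist aNew bNew = (a.length - b.length) + editDist a b ∧
    (editDist aNew bNew = Q - ρ ↔ editDist a b = Q' - ρ) ∧
    (editDist aNew bNew = Q ↔ editDist a b = Q') :=
  gadget_size_preserved_general a b Q' ρ ha hb hlen hρQ
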